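/- arXiv:1305.7011 — 4 statements merged into one kernel-verified Lean document; each statement's English description precedes it below -/
import Mathlib

section
/- Let p be a prime, and let λ₁ ≥ λ₂ and μ₁ ≥ μ₂ be integers with λ₁+λ₂ ≠ μ₁+μ₂. Suppose real (or complex) numbers a_F(p^r), a_G(p^r) for r = 1,2,3 satisfy the relations a(p³) − 2a(p)a(p²) + a(p)³ − p^{w−4}(p+1)a(p) = 0, where w = λ₁+λ₂ for the a_F sequence and w = μ₁+μ₂ for the a_G sequence. If a_F(p) ≠ 0 (or a_G(p) ≠ 0), then (a_F(p), a_F(p²), a_F(p³)) ≠ (a_G(p), a_G(p²), a_G(p³)). -/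
/-! Subtracting the cubic relations of the two weights from each other leaves
`(p ^ (w - 4) - p ^ (w' - 4)) (p + 1) a(p) = 0`; since `a(p) ≠ 0` and an integer `p ≥ 2` is not a
root of unity in a field of characteristic zero, the weights agree. -/

theorem natCast_zpow_injective {K : Type*} [Field K] [CharZero K] {n : ℕ} (hn : 1 < n) :
    Function.Injective fun k : ℤ => (n : K) ^ k := by
  intro a b hab
  have hℚ : (n : ℚ) ^ a = (n : ℚ) ^ b := by
    apply Rat.cast_injective (α := K)
    simpa only [Rat.cast_zpow, Rat.cast_natCast] using hab
  exact zpow_right_injective₀ (by exact_mod_cast Nat.zero_lt_of_lt hn)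
    (by exact_mod_cast hn.ne') hℚ

/-- Equation (5.1) of the paper, for `aᵢ = a(pⁱ)` the Hecke eigenvalues of a degree-2 Siegel
eigenform of total weight `w`. -/
def HeckeCubicRelation {K : Type*} [Field K] (p : ℕ) (w : ℤ) (a₁ a₂ a₃ : K) : Prop :=
  a₃ - 2 * a₁ * a₂ + a₁ ^ 3 - (p : K) ^ (w - 4) * ((p : K) + 1) * a₁ = 0

theorem HeckeCubicRelation.weight_eq {K : Type*} [Field K] [CharZero K] {p : ℕ} (hp : 1 < p)
    {w w' : ℤ} {a₁ a₂ a₃ : K} (h : HeckeCubicRelation p w a₁ a₂ a₃)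
    (h' : HeckeCubicRelation p w' a₁ a₂ a₃) (ha₁ : a₁ ≠ 0) : w = w' := by
  have hdiff : ((p : K) ^ (w - 4) - (p : K) ^ (w' - 4)) * (((p : K) + 1) * a₁) = 0 := by
    unfold HeckeCubicRelation at h h'
    linear_combination h' - h
  have hpow : (p : K) ^ (w - 4) = (p : K) ^ (w' - 4) :=
    sub_eq_zero.mp ((mul_eq_zero.mp hdiff).resolve_right
      (mul_ne_zero (Nat.cast_add_one_ne_zero p) ha₁))
  exact sub_left_inj.mp (natCast_zpow_injective hp hpow)

theorem stmt5_general (p : ℕ) (hp : p.Prime) (l1 l2 m1 m2 : ℤ)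
    (hw : l1 + l2 ≠ m1 + m2) (aF1 aF2 aF3 aG1 aG2 aG3 : ℂ)
    (hF : aF3 - 2 * aF1 * aF2 + aF1 ^ 3
        - (p : ℂ) ^ (l1 + l2 - 4) * ((p : ℂ) + 1) * aF1 = 0)
    (hG : aG3 - 2 * aG1 * aG2 + aG1 ^ 3
        - (p : ℂ) ^ (m1 + m2 - 4) * ((p : ℂ) + 1) * aG1 = 0)
    (ha : aF1 ≠ 0 ∨ aG1 ≠ 0) :
    (aF1, aF2, aF3) ≠ (aG1, aG2, aG3) := by
  intro h
  obtain ⟨rfl, rfl, rfl⟩ : aF1 = aG1 ∧ aF2 = aG2 ∧ aF3 = aG3 := by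
    simpa only [Prod.mk.injEq] using h
  exact hw (HeckeCubicRelation.weight_eq hp.one_lt hF hG (ha.elim id id))

/-- If the eigenvalue triples of two degree-2 Siegel eigenforms of distinct total
weights satisfy the cubic Hecke relation and one of `a_F(p)`, `a_G(p)` is nonzero,
then the triples `(a(p), a(p²), a(p³))` differ. -/
theorem stmt5 (p : ℕ) (hp : p.Prime) (l1 l2 m1 m2 : ℤ) (hl : l2 ≤ l1) (hm : m2 ≤ m1)
    (hw : l1 + l2 ≠ m1 + m2) (aF1 aF2 aF3 aG1 aG2 aG3 : ℂ)
    (hF : aF3 - 2 * aF1 * aF2 + aF1 ^ 3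
        - (p : ℂ) ^ (l1 + l2 - 4) * ((p : ℂ) + 1) * aF1 = 0)
    (hG : aG3 - 2 * aG1 * aG2 + aG1 ^ 3
        - (p : ℂ) ^ (m1 + m2 - 4) * ((p : ℂ) + 1) * aG1 = 0)
    (ha : aF1 ≠ 0 ∨ aG1 ≠ 0) :
    (aF1, aF2, aF3) ≠ (aG1, aG2, aG3) :=
  stmt5_general p hp l1 l2 m1 m2 hw aF1 aF2 aF3 aG1 aG2 aG3 hF hG ha
end

section
/- Let p be a prime and λ₁+λ₂ ≠ μ₁+μ₂ be integers (sums of the weight pairs). Suppose complex numbers a(p²), a(p⁴), a(p⁶) simultaneously satisfy, for both w = λ₁+λ₂ and w = μ₁+μ₂, the relations a(p⁴) − a(p²)² − p^{w−4}a(p²) + p^{2w−6} = 0 and a(p⁶) − a(p⁴)a(p²) − p^{w−4}a(p⁴) + p^{2w−6}a(p²) = 0. Then no such triple (a(p²), a(p⁴), a(p⁶)) exists; i.e., the two systems of relations for distinct w are inconsistent. -/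
/-! Write `x = p^(w₁-4)` and `y = p^(w₂-4)`; then `p^(2w₁-6) = p² x²`, so both systems are
polynomial, and `x ≠ y` because `p > 1`. Subtracting the quartic relations gives
`(x - y) a(p²) = p² (x² - y²)`, so `a(p²) = p² (x + y)`; the sextic relations likewise give
`a(p⁴) = p² (x + y) a(p²)`. Substituting both back into the quartic relation leaves
`p² x y = 0`, which is absurd. -/

theorem zpow_two_mul_sub_six {G : Type*} [GroupWithZero G] {a : G} (ha : a ≠ 0) (w : ℤ) :
    a ^ (2 * w - 6) = a ^ 2 * (a ^ (w - 4)) ^ 2 := by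
  rw [show 2 * w - 6 = 2 + (w - 4) * 2 by ring, zpow_add₀ ha, zpow_mul]
  norm_cast

theorem Nat.cast_zpow_injective {K : Type*} [Field K] [CharZero K] {p : ℕ} (hp : 1 < p) :
    Function.Injective fun n : ℤ => (p : K) ^ n := by
  intro m n hmn
  have hpq : 1 < (p : ℚ) := by exact_mod_cast hp
  apply zpow_right_injective₀ (by positivity) hpq.ne'
  exact Rat.cast_injective (α := K) (by simpa using hmn)

theorem hecke_relations_inconsistent {R : Type*} [CommRing R] [IsDomain R]
    {c x y a2 a4 a6 : R} (hc : c ≠ 0) (hx : x ≠ 0) (hy : y ≠ 0) (hxy : x ≠ y)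
    (hx₄ : a4 - a2 ^ 2 - x * a2 + c * x ^ 2 = 0)
    (hx₆ : a6 - a4 * a2 - x * a4 + c * x ^ 2 * a2 = 0)
    (hy₄ : a4 - a2 ^ 2 - y * a2 + c * y ^ 2 = 0)
    (hy₆ : a6 - a4 * a2 - y * a4 + c * y ^ 2 * a2 = 0) : False := by
  have hxy' : x - y ≠ 0 := sub_ne_zero.2 hxy
  have ha2 : a2 = c * (x + y) :=
    mul_left_cancel₀ hxy' (by linear_combination hy₄ - hx₄)
  have ha4 : a4 = c * (x + y) * a2 :=
    mul_left_cancel₀ hxy' (by linear_combination hy₆ - hx₆)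
  have hcxy : c * x * y = 0 := by
    rw [ha4, ha2] at hx₄
    linear_combination -hx₄
  exact mul_ne_zero (mul_ne_zero hc hx) hy hcxy

/-- The quartic and sextic Hecke relations for two distinct total weights `w1 ≠ w2`
cannot be satisfied simultaneously by a common triple `(a(p²), a(p⁴), a(p⁶))`. -/
theorem stmt6 (p : ℕ) (hp : p.Prime) (w1 w2 : ℤ) (hw : w1 ≠ w2) (a2 a4 a6 : ℂ)
    (h1 : a4 - a2 ^ 2 - (p : ℂ) ^ (w1 - 4) * a2 + (p : ℂ) ^ (2 * w1 - 6) = 0)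
    (h2 : a6 - a4 * a2 - (p : ℂ) ^ (w1 - 4) * a4 + (p : ℂ) ^ (2 * w1 - 6) * a2 = 0)
    (h3 : a4 - a2 ^ 2 - (p : ℂ) ^ (w2 - 4) * a2 + (p : ℂ) ^ (2 * w2 - 6) = 0)
    (h4 : a6 - a4 * a2 - (p : ℂ) ^ (w2 - 4) * a4 + (p : ℂ) ^ (2 * w2 - 6) * a2 = 0) :
    False := by
  have hp0 : (p : ℂ) ≠ 0 := Nat.cast_ne_zero.2 hp.ne_zero
  have hxy : (p : ℂ) ^ (w1 - 4) ≠ (p : ℂ) ^ (w2 - 4) := fun h =>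
    hw (by simpa using Nat.cast_zpow_injective hp.one_lt h)
  rw [zpow_two_mul_sub_six hp0] at h1 h2 h3 h4
  exact hecke_relations_inconsistent (pow_ne_zero 2 hp0) (zpow_ne_zero _ hp0)
    (zpow_ne_zero _ hp0) hxy h1 h2 h3 h4
end

section
/- For every integer N ≥ 1, there exists a prime p not dividing N with p ≤ 2·log(N) + 2. -/
/-!
If every prime `p ≤ x := 2 log N + 2` divided `N`, then so would the primorial of `x`, giving
`θ x ≤ log N = x / 2 - 1`. This contradicts the Chebyshev-type bound `(n - 1) / 2 ≤ θ n` for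
natural `n`: for `n ≥ 10000` it follows from Mathlib's `θ n ≥ n log 2 - log (n + 1) - 2 √n log n`,
and below that it is checked by a kernel computation of the primorials.
-/

open Real Chebyshev

theorem primorial_succ_eq_ite (n : ℕ) :
    primorial (n + 1) = if (n + 1).Prime then (n + 1) * primorial n else primorial n := by
  rw [primorial, Finset.range_add_one, Finset.filter_insert]
  split_ifs
  · rw [Finset.prod_insert (by simp), ← primorial]
  · rfl

theorem prime_succ_iff_coprime_primorial {n : ℕ} (hn : n ≠ 0) :
    (n + 1).Prime ↔ Nat.Coprime (n + 1) (primorial n) := by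
  refine ⟨fun hp ↦ hp.coprime_iff_not_dvd.2 fun h ↦ ?_, fun h ↦ ?_⟩
  · exact (hp.dvd_primorial_iff.1 h).not_gt n.lt_succ_self
  · by_contra hnp
    have hq := Nat.minFac_prime (n := n + 1) (by omega)
    have hlt := (Nat.not_prime_iff_minFac_lt (by omega)).1 hnp
    refine Nat.Prime.not_coprime_iff_dvd.2 ⟨_, hq, Nat.minFac_dvd _, ?_⟩ h
    exact hq.dvd_primorial_iff.2 (Nat.lt_succ_iff.1 hlt)

/-- Checks `3 ^ m ≤ 3 * primorial m ^ 2` (an integer stand-in for `e ^ (m - 1) ≤ primorial m ^ 2`)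
for `n ≤ m < n + k`, carrying `P = primorial m` along. Testing primality of `m + 1` as
coprimality with `P` keeps the kernel evaluation linear in `k`. -/
def primorialSqCheck : ℕ → ℕ → ℕ → Bool
  | 0, _, _ => true
  | k + 1, n, P => 3 ^ n ≤ 3 * P ^ 2 &&
      primorialSqCheck k (n + 1) (if Nat.Coprime (n + 1) P then (n + 1) * P else P)

theorem three_pow_le_of_primorialSqCheck {k n : ℕ} (hn : n ≠ 0)
    (h : primorialSqCheck k n (primorial n) = true) {m : ℕ} (hnm : n ≤ m) (hmk : m < n + k) :
    3 ^ m ≤ 3 * primorial m ^ 2 := by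
  induction k generalizing n with
  | zero => omega
  | succ k ih =>
    simp only [primorialSqCheck, ← prime_succ_iff_coprime_primorial hn, ← primorial_succ_eq_ite,
      Bool.and_eq_true, decide_eq_true_eq] at h
    rcases hnm.eq_or_lt with rfl | hlt
    · exact h.1
    · exact ih n.succ_ne_zero h.2 hlt (by omega)

theorem three_pow_le_three_mul_primorial_sq {n : ℕ} (hn : n ≤ 10000) :
    3 ^ n ≤ 3 * primorial n ^ 2 := by
  rcases n.eq_zero_or_pos with rfl | hpos
  · simp
  refine three_pow_le_of_primorialSqCheck (k := 10000) one_ne_zero ?_ hpos (by omega)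
  rw [primorial_one]
  decide +kernel

theorem half_sub_one_le_theta_of_le {n : ℕ} (hn : n ≤ 10000) : ((n : ℝ) - 1) / 2 ≤ θ n := by
  rcases n.eq_zero_or_pos with rfl | hpos
  · linarith [theta_nonneg 0]
  have hcast : (3 : ℝ) ^ n ≤ 3 * (primorial n : ℝ) ^ 2 :=
    mod_cast three_pow_le_three_mul_primorial_sq hn
  have hlog : n * log 3 ≤ log 3 + 2 * θ n := by
    have hP : (0 : ℝ) < primorial n := mod_cast primorial_pos n
    rw [theta_eq_log_primorial, Nat.floor_natCast]
    have := log_le_log (by positivity) hcast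
    rwa [log_pow, log_mul (by norm_num) (by positivity), log_pow] at this
  have h1 : (1 : ℝ) ≤ n := mod_cast hpos
  nlinarith [log_three_gt_d9]

theorem half_sub_one_le_theta_of_ge {n : ℕ} (hn : 10000 ≤ n) : ((n : ℝ) - 1) / 2 ≤ θ n := by
  refine le_trans ?_ (theta_ge n)
  set s := √(n : ℝ)
  have hs100 : 100 ≤ s := (le_sqrt (by norm_num) (by positivity)).2 (by norm_num; exact_mod_cast hn)
  have hns : (n : ℝ) = s ^ 2 := (sq_sqrt (by positivity)).symm
  have hlog_n : log n = 2 * log s := by rw [hns, log_pow]; push_cast; ring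
  have hlog_succ : log (n + 1) ≤ log 2 + 2 * log s := by
    rw [← hlog_n, ← log_mul two_ne_zero (by positivity)]
    exact log_le_log (by positivity) (by linarith [(Nat.one_le_cast.2 (by omega) : (1 : ℝ) ≤ n)])
  have htangent : log s ≤ 7 * log 2 + s / 128 - 1 := by
    have := log_le_sub_one_of_pos (x := s / 128) (by positivity)
    rw [log_div (by positivity) (by norm_num), show (128 : ℝ) = 2 ^ 7 by norm_num, log_pow] at this
    push_cast at this
    linarith
  rw [hlog_n]
  rw [hns] at hlog_succ ⊢
  have hL := log_two_gt_d9
  have hL' := log_two_lt_d9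
  nlinarith [mul_le_mul_of_nonneg_left htangent (by linarith : (0 : ℝ) ≤ s),
    mul_le_mul_of_nonneg_left hL.le (sq_nonneg s),
    mul_le_mul_of_nonneg_left hL'.le (by linarith : (0 : ℝ) ≤ s)]

theorem half_sub_one_le_theta (n : ℕ) : ((n : ℝ) - 1) / 2 ≤ θ n := by
  rcases le_total n 10000 with hn | hn
  · exact half_sub_one_le_theta_of_le hn
  · exact half_sub_one_le_theta_of_ge hn

theorem half_sub_one_lt_theta (x : ℝ) : x / 2 - 1 < θ x := by
  rw [theta_eq_theta_coe_floor]
  rcases lt_or_ge x 0 with hx | hx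
  · linarith [theta_nonneg ⌊x⌋₊]
  · linarith [half_sub_one_le_theta ⌊x⌋₊, Nat.lt_floor_add_one x]

theorem theta_le_log_of_forall_prime_dvd {x : ℝ} {N : ℕ} (hN : N ≠ 0)
    (h : ∀ p : ℕ, p.Prime → (p : ℝ) ≤ x → p ∣ N) : θ x ≤ log N := by
  have hdvd : primorial ⌊x⌋₊ ∣ N := by
    refine Finset.prod_primes_dvd _ (fun p hp ↦ (Finset.mem_filter.1 hp).2.prime) fun p hp ↦ ?_
    obtain ⟨hp, hprime⟩ := Finset.mem_filter.1 hp
    exact h p hprime ((Nat.le_floor_iff' hprime.ne_zero).1 (Finset.mem_range_succ_iff.1 hp))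
  rw [theta_eq_log_primorial]
  exact log_le_log (by exact_mod_cast primorial_pos _)
    (by exact_mod_cast Nat.le_of_dvd (Nat.pos_of_ne_zero hN) hdvd)

/-- For every `N ≥ 1` there is a prime `p` not dividing `N` with `p ≤ 2 log N + 2`. -/
theorem stmt11 (N : ℕ) (hN : 1 ≤ N) :
    ∃ p : ℕ, p.Prime ∧ ¬ p ∣ N ∧ (p : ℝ) ≤ 2 * Real.log N + 2 := by
  by_contra! h
  have hθ : θ (2 * log N + 2) ≤ log N :=
    theta_le_log_of_forall_prime_dvd (by omega) fun p hp hpx ↦ by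
      by_contra hpN
      exact (h p hp hpN).not_ge hpx
  linarith [half_sub_one_lt_theta (2 * log N + 2)]
end

section
/- Let p be prime, n ≥ 1, k an integer, and suppose elements T(p), T(p²), T₀(p²),…,T_n(p²) of a commutative ℚ-algebra satisfy the Hafner–Walling relation 𝒯̃_n(p²) = 𝒯(p)² − ∑_{j=0}^{n−1} p^{k(n−j)+j(j+1)/2−n(n+1)/2} 𝒯̃_j(p²), where 𝒯(p) = p^{n(k−n−1)/2}T(p), 𝒯̃_j(p²) = p^{j(k−n−1)} ∑_{t=0}^{j} binom(n−t,j−t)_p T_{n−t}(p²), and T(p²) = ∑_{j=0}^{n} T_j(p²). Then T(p²) = T(p)² − ∑_{s=1}^{n} c_s T_s(p²) with c_s = ∑_{i=1}^{s} p^{i(i+1)/2} binom(s,i)_p = (∏_{i=1}^{s}(p^i+1)) − 1. -/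
/-
Multiplying the Hafner–Walling relation by `p ^ (-n(k-n-1))` turns the weight of its `j`-th term
into `p ^ ((n-j)(n-j+1)/2)`. After exchanging the two summations, the coefficient of `T_r(p²)` is
`∑_{a ≤ r} p^{a(a+1)/2} binom(r,a)_p`, which the Gauss binomial formula evaluates to
`∏_{i=1}^r (p^i + 1)`. Hence `T(p)² = ∑_{r ≤ n} ∏_{i=1}^r (p^i + 1) T_r(p²)`, and subtracting
`T(p²) = ∑_{r ≤ n} T_r(p²)` gives the claim.
-/

/-- The Gaussian (q-)binomial coefficient evaluated at a real `p`. -/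
noncomputable def gaussBinomR (p : ℝ) (m l : ℕ) : ℝ :=
  ∏ i ∈ Finset.Icc 1 l, (p ^ (m - l + i) - 1) / (p ^ i - 1)

open Finset

theorem Finset.sum_range_add_one_eq_add_sum_Icc {M : Type*} [AddCommMonoid M] (f : ℕ → M) (n : ℕ) :
    ∑ i ∈ range (n + 1), f i = f 0 + ∑ i ∈ Icc 1 n, f i := by
  rw [range_eq_Ico, sum_eq_sum_Ico_succ_bot (by omega : 0 < n + 1), Ico_add_one_right_eq_Icc]

theorem Finset.sum_range_sum_range_reflect {M : Type*} [AddCommMonoid M] (n : ℕ) (f : ℕ → ℕ → M) :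
    ∑ j ∈ range (n + 1), ∑ t ∈ range (j + 1), f (n - j) (n - t) =
      ∑ r ∈ range (n + 1), ∑ a ∈ range (r + 1), f a r := by
  rw [sum_sigma', sum_sigma']
  refine sum_nbij' (fun x ↦ ⟨n - x.2, n - x.1⟩) (fun x ↦ ⟨n - x.2, n - x.1⟩) ?_ ?_ ?_ ?_
    (fun _ _ ↦ rfl) <;>
  simp only [mem_range, Sigma.forall, mem_sigma, Sigma.mk.injEq, heq_eq_eq] <;>
  omega

theorem Nat.succ_mul_succ_add_one_div_two (i : ℕ) :
    (i + 1) * (i + 1 + 1) / 2 = i * (i + 1) / 2 + (i + 1) := by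
  rw [show (i + 1) * (i + 1 + 1) = i * (i + 1) + (i + 1) * 2 by ring,
    Nat.add_mul_div_right _ _ two_pos]

theorem Real.rpow_intCast_div_two_sq {x : ℝ} (hx : 0 ≤ x) (N : ℤ) :
    (x ^ ((N : ℝ) / 2)) ^ 2 = x ^ N := by
  rw [← Real.rpow_mul_natCast hx, Nat.cast_ofNat, div_mul_cancel₀ _ two_ne_zero, Real.rpow_intCast]

theorem hafnerWalling_exponent_add (k : ℤ) {n j : ℕ} (h : j ≤ n) :
    k * ((n : ℤ) - j) + (j : ℤ) * (j + 1) / 2 - (n : ℤ) * (n + 1) / 2 + j * (k - n - 1) =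
      n * (k - n - 1) + ((n - j) * (n - j + 1) / 2 : ℕ) := by
  obtain ⟨d, rfl⟩ := Nat.exists_eq_add_of_le h
  rw [Nat.add_sub_cancel_left]
  push_cast
  have h₁ := Int.ediv_mul_cancel (even_iff_two_dvd.mp (Int.even_mul_succ_self (j : ℤ)))
  have h₂ := Int.ediv_mul_cancel (even_iff_two_dvd.mp (Int.even_mul_succ_self ((j : ℤ) + d)))
  have h₃ := Int.ediv_mul_cancel (even_iff_two_dvd.mp (Int.even_mul_succ_self (d : ℤ)))
  linarith

namespace gaussBinomR

variable {q : ℝ}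

noncomputable def prodPowSubOne (q : ℝ) (l : ℕ) : ℝ := ∏ i ∈ Icc 1 l, (q ^ i - 1)

theorem prodPowSubOne_succ (q : ℝ) (l : ℕ) :
    prodPowSubOne q (l + 1) = prodPowSubOne q l * (q ^ (l + 1) - 1) :=
  prod_Icc_succ_top (by omega) _

theorem prodPowSubOne_ne_zero (hq : ∀ i ≠ 0, q ^ i ≠ 1) (l : ℕ) : prodPowSubOne q l ≠ 0 :=
  prod_ne_zero_iff.mpr fun i hi => sub_ne_zero.mpr (hq i (by grind))

theorem prod_Icc_add_mul_prodPowSubOne (q : ℝ) (a l : ℕ) :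
    (∏ i ∈ Icc 1 l, (q ^ (a + i) - 1)) * prodPowSubOne q a = prodPowSubOne q (a + l) := by
  induction l with
  | zero => simp
  | succ l ih =>
    rw [prod_Icc_succ_top (by omega), mul_right_comm, ih, ← add_assoc, prodPowSubOne_succ]

theorem mul_prodPowSubOne_mul_prodPowSubOne (hq : ∀ i ≠ 0, q ^ i ≠ 1) {m l : ℕ} (h : l ≤ m) :
    gaussBinomR q m l * prodPowSubOne q l * prodPowSubOne q (m - l) = prodPowSubOne q m := by
  have hcancel : gaussBinomR q m l * prodPowSubOne q l = ∏ i ∈ Icc 1 l, (q ^ (m - l + i) - 1) := by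
    rw [gaussBinomR, prodPowSubOne, ← prod_mul_distrib]
    exact prod_congr rfl fun i hi => div_mul_cancel₀ _ (sub_ne_zero.mpr (hq i (by grind)))
  rw [hcancel, prod_Icc_add_mul_prodPowSubOne, Nat.sub_add_cancel h]

theorem symm (hq : ∀ i ≠ 0, q ^ i ≠ 1) {m l : ℕ} (h : l ≤ m) :
    gaussBinomR q m (m - l) = gaussBinomR q m l := by
  have key := mul_prodPowSubOne_mul_prodPowSubOne hq (Nat.sub_le m l)
  rw [Nat.sub_sub_self h, mul_right_comm, ← mul_prodPowSubOne_mul_prodPowSubOne hq h] at key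
  exact mul_right_cancel₀ (prodPowSubOne_ne_zero hq l)
    (mul_right_cancel₀ (prodPowSubOne_ne_zero hq (m - l)) key)

@[simp]
theorem zero_right (q : ℝ) (m : ℕ) : gaussBinomR q m 0 = 1 := by simp [gaussBinomR]

theorem self (hq : ∀ i ≠ 0, q ^ i ≠ 1) (m : ℕ) : gaussBinomR q m m = 1 := by
  refine prod_eq_one fun i hi => ?_
  rw [Nat.sub_self, zero_add, div_self (sub_ne_zero.mpr (hq i (by grind)))]

-- `l < m` matters: for `l = m` the defining product gives the junk value
-- `gaussBinomR q m (m + 1) = 1` rather than `0`.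
theorem succ_succ (hq : ∀ i ≠ 0, q ^ i ≠ 1) {m l : ℕ} (h : l < m) :
    gaussBinomR q (m + 1) (l + 1) = gaussBinomR q m (l + 1) + q ^ (m - l) * gaussBinomR q m l := by
  obtain ⟨a, rfl⟩ := Nat.exists_eq_add_of_lt h
  have h₁ := mul_prodPowSubOne_mul_prodPowSubOne hq (m := l + a + 1 + 1) (l := l + 1) (by omega)
  have h₂ := mul_prodPowSubOne_mul_prodPowSubOne hq (m := l + a + 1) (l := l + 1) (by omega)
  have h₃ := mul_prodPowSubOne_mul_prodPowSubOne hq (m := l + a + 1) (l := l) (by omega)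
  rw [show l + a + 1 + 1 - (l + 1) = a + 1 by omega] at h₁
  rw [show l + a + 1 - (l + 1) = a by omega] at h₂
  rw [show l + a + 1 - l = a + 1 by omega] at h₃ ⊢
  apply mul_right_cancel₀ (mul_ne_zero (prodPowSubOne_ne_zero hq (l + 1))
    (prodPowSubOne_ne_zero hq (a + 1)))
  simp only [prodPowSubOne_succ] at h₁ h₂ h₃ ⊢
  linear_combination h₁ - (q ^ (a + 1) - 1) * h₂ - q ^ (a + 1) * (q ^ (l + 1) - 1) * h₃

theorem sum_range_pow_mul_eq_prod (hq : ∀ i ≠ 0, q ^ i ≠ 1) (s : ℕ) :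
    ∑ i ∈ range (s + 1), q ^ (i * (i + 1) / 2) * gaussBinomR q s i =
      ∏ i ∈ Icc 1 s, (q ^ i + 1) := by
  induction s with
  | zero => simp
  | succ s ih =>
    have hpascal : ∀ j ∈ range s,
        q ^ ((j + 1) * (j + 1 + 1) / 2) * gaussBinomR q (s + 1) (j + 1) =
          q ^ ((j + 1) * (j + 1 + 1) / 2) * gaussBinomR q s (j + 1) +
            q ^ (s + 1) * (q ^ (j * (j + 1) / 2) * gaussBinomR q s j) := by
      intro j hj
      have hjs : j < s := mem_range.mp hj
      rw [succ_succ hq hjs, Nat.succ_mul_succ_add_one_div_two,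
        show s + 1 = (j + 1) + (s - j) by omega]
      ring
    have htop : q ^ ((s + 1) * (s + 1 + 1) / 2) * gaussBinomR q (s + 1) (s + 1) =
        q ^ (s + 1) * (q ^ (s * (s + 1) / 2) * gaussBinomR q s s) := by
      rw [self hq, self hq, Nat.succ_mul_succ_add_one_div_two, pow_add]
      ring
    have hlow := sum_range_succ' (fun i => q ^ (i * (i + 1) / 2) * gaussBinomR q s i) s
    have hhigh := sum_range_succ (fun i => q ^ (i * (i + 1) / 2) * gaussBinomR q s i) s
    rw [sum_range_succ', sum_range_succ, sum_congr rfl hpascal, sum_add_distrib, ← mul_sum, htop,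
      prod_Icc_succ_top (by omega), ← ih]
    simp only [zero_right, zero_add, mul_one, Nat.zero_div, pow_zero] at hlow ⊢
    linear_combination -hlow - q ^ (s + 1) * hhigh

theorem sum_Icc_pow_mul_eq_prod_sub_one (hq : ∀ i ≠ 0, q ^ i ≠ 1) (s : ℕ) :
    ∑ i ∈ Icc 1 s, q ^ (i * (i + 1) / 2) * gaussBinomR q s i =
      (∏ i ∈ Icc 1 s, (q ^ i + 1)) - 1 := by
  rw [← sum_range_pow_mul_eq_prod hq s, sum_range_add_one_eq_add_sum_Icc]
  simp

theorem sum_pow_mul_sum_mul_eq_sum_prod_mul (hq : ∀ i ≠ 0, q ^ i ≠ 1) {A : Type*} [Semiring A]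
    [Algebra ℝ A] (n : ℕ) (T : ℕ → A) :
    ∑ j ∈ range (n + 1), algebraMap ℝ A (q ^ ((n - j) * (n - j + 1) / 2)) *
        ∑ t ∈ range (j + 1), algebraMap ℝ A (gaussBinomR q (n - t) (j - t)) * T (n - t) =
      ∑ r ∈ range (n + 1), algebraMap ℝ A (∏ i ∈ Icc 1 r, (q ^ i + 1)) * T r := by
  let f : ℕ → ℕ → A := fun a r => algebraMap ℝ A (q ^ (a * (a + 1) / 2) * gaussBinomR q r a) * T r
  calc _ = ∑ j ∈ range (n + 1), ∑ t ∈ range (j + 1), f (n - j) (n - t) := by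
        refine sum_congr rfl fun j hj => ?_
        rw [mul_sum]
        refine sum_congr rfl fun t ht => ?_
        have htj : t ≤ j := Nat.lt_succ_iff.mp (mem_range.mp ht)
        rw [show j - t = (n - t) - (n - j) by grind, symm hq (by omega), ← mul_assoc, ← map_mul]
    _ = ∑ r ∈ range (n + 1), ∑ a ∈ range (r + 1), f a r := sum_range_sum_range_reflect n f
    _ = _ := by
        refine sum_congr rfl fun r _ => ?_
        rw [← sum_mul, ← map_sum, sum_range_pow_mul_eq_prod hq]

theorem sum_range_eq_sum_prod_mul_sub_sum_Icc (hq : ∀ i ≠ 0, q ^ i ≠ 1) {A : Type*} [Ring A]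
    [Algebra ℝ A] (n : ℕ) (T : ℕ → A) :
    ∑ r ∈ range (n + 1), T r =
      ∑ r ∈ range (n + 1), algebraMap ℝ A (∏ i ∈ Icc 1 r, (q ^ i + 1)) * T r -
        ∑ s ∈ Icc 1 n,
          algebraMap ℝ A (∑ i ∈ Icc 1 s, q ^ (i * (i + 1) / 2) * gaussBinomR q s i) * T s := by
  have hsplit : ∀ r ∈ range (n + 1), algebraMap ℝ A (∏ i ∈ Icc 1 r, (q ^ i + 1)) * T r =
      T r + algebraMap ℝ A (∑ i ∈ Icc 1 r, q ^ (i * (i + 1) / 2) * gaussBinomR q r i) * T r := by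
    intro r _
    rw [sum_Icc_pow_mul_eq_prod_sub_one hq, map_sub, map_one, sub_mul, one_mul, add_sub_cancel]
  rw [sum_congr rfl hsplit, sum_add_distrib,
    sum_range_add_one_eq_add_sum_Icc (fun r => algebraMap ℝ A _ * T r)]
  simp

end gaussBinomR

theorem stmt15_general (p : ℕ) (hp : p.Prime) (n : ℕ) (k : ℤ)
    {A : Type*} [CommRing A] [Algebra ℝ A]
    (Tp Tsq : A) (T : ℕ → A)
    (hTsq : Tsq = ∑ j ∈ Finset.range (n + 1), T j)
    (tT : ℕ → A)
    (htT : ∀ j : ℕ, tT j =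
      algebraMap ℝ A ((p : ℝ) ^ ((j : ℤ) * (k - n - 1))) *
        ∑ t ∈ Finset.range (j + 1),
          algebraMap ℝ A (gaussBinomR p (n - t) (j - t)) * T (n - t))
    (hHW : tT n =
      (algebraMap ℝ A ((p : ℝ) ^ (((((n : ℤ) * (k - n - 1)) : ℤ) : ℝ) / 2)) * Tp) ^ 2
        - ∑ j ∈ Finset.range n,
            algebraMap ℝ A
              ((p : ℝ) ^ (k * ((n : ℤ) - j) + (j : ℤ) * (j + 1) / 2
                - (n : ℤ) * (n + 1) / 2)) * tT j) :
    Tsq = Tp ^ 2 - ∑ s ∈ Finset.Icc 1 n,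
        algebraMap ℝ A
          (∑ i ∈ Finset.Icc 1 s, (p : ℝ) ^ (i * (i + 1) / 2) * gaussBinomR p s i) * T s
      ∧ ∀ s ∈ Finset.Icc 1 n,
          ∑ i ∈ Finset.Icc 1 s, (p : ℝ) ^ (i * (i + 1) / 2) * gaussBinomR p s i
            = (∏ i ∈ Finset.Icc 1 s, ((p : ℝ) ^ i + 1)) - 1 := by
  have hp0 : (p : ℝ) ≠ 0 := by exact_mod_cast hp.ne_zero
  have hq : ∀ i ≠ 0, (p : ℝ) ^ i ≠ 1 := fun i hi =>
    (one_lt_pow₀ (by exact_mod_cast hp.one_lt) hi).ne'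
  refine ⟨?_, fun s _ => gaussBinomR.sum_Icc_pow_mul_eq_prod_sub_one hq s⟩
  have hterm : ∀ j ∈ range (n + 1),
      algebraMap ℝ A ((p : ℝ) ^ (k * ((n : ℤ) - j) + (j : ℤ) * (j + 1) / 2
        - (n : ℤ) * (n + 1) / 2)) * tT j =
      algebraMap ℝ A ((p : ℝ) ^ ((n : ℤ) * (k - n - 1))) *
        (algebraMap ℝ A ((p : ℝ) ^ ((n - j) * (n - j + 1) / 2)) *
          ∑ t ∈ range (j + 1), algebraMap ℝ A (gaussBinomR p (n - t) (j - t)) * T (n - t)) := by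
    intro j hj
    rw [htT, ← mul_assoc, ← mul_assoc, ← map_mul, ← map_mul, ← zpow_add₀ hp0,
      hafnerWalling_exponent_add k (by grind), zpow_add₀ hp0, zpow_natCast]
  have hsum : algebraMap ℝ A ((p : ℝ) ^ ((n : ℤ) * (k - n - 1))) *
      ∑ r ∈ range (n + 1), algebraMap ℝ A (∏ i ∈ Icc 1 r, ((p : ℝ) ^ i + 1)) * T r =
      algebraMap ℝ A ((p : ℝ) ^ ((n : ℤ) * (k - n - 1))) * Tp ^ 2 := by
    rw [← gaussBinomR.sum_pow_mul_sum_mul_eq_sum_prod_mul hq, mul_sum, ← sum_congr rfl hterm,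
      sum_range_succ, hHW, mul_pow, ← map_pow, Real.rpow_intCast_div_two_sq (Nat.cast_nonneg p)]
    simp
  have hprod :=
    ((isUnit_iff_ne_zero.mpr (zpow_ne_zero _ hp0)).map (algebraMap ℝ A)).mul_left_cancel hsum
  rw [hTsq, ← hprod]
  exact gaussBinomR.sum_range_eq_sum_prod_mul_sub_sum_Icc hq n T

/-- From the Hafner–Walling relation
`𝒯̃_n(p²) = 𝒯(p)² − ∑_{j=0}^{n-1} p^{k(n-j)+j(j+1)/2−n(n+1)/2} 𝒯̃_j(p²)`,
where `𝒯(p) = p^{n(k-n-1)/2} T(p)` and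
`𝒯̃_j(p²) = p^{j(k-n-1)} ∑_{t=0}^{j} binom(n-t,j-t)_p T_{n-t}(p²)`,
one deduces `T(p²) = T(p)² − ∑_{s=1}^{n} c_s T_s(p²)` with
`c_s = ∑_{i=1}^s p^{i(i+1)/2} binom(s,i)_p = ∏_{i=1}^s (p^i+1) − 1`. -/
theorem stmt15 (p : ℕ) (hp : p.Prime) (n : ℕ) (hn : 1 ≤ n) (k : ℤ)
    {A : Type*} [CommRing A] [Algebra ℝ A]
    (Tp Tsq : A) (T : ℕ → A) (hT0 : T 0 = 1)
    (hTsq : Tsq = ∑ j ∈ Finset.range (n + 1), T j)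
    (tT : ℕ → A)
    (htT : ∀ j : ℕ, tT j =
      algebraMap ℝ A ((p : ℝ) ^ ((j : ℤ) * (k - n - 1))) *
        ∑ t ∈ Finset.range (j + 1),
          algebraMap ℝ A (gaussBinomR p (n - t) (j - t)) * T (n - t))
    (hHW : tT n =
      (algebraMap ℝ A ((p : ℝ) ^ (((((n : ℤ) * (k - n - 1)) : ℤ) : ℝ) / 2)) * Tp) ^ 2
        - ∑ j ∈ Finset.range n,
            algebraMap ℝ A
              ((p : ℝ) ^ (k * ((n : ℤ) - j) + (j : ℤ) * (j + 1) / 2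
                - (n : ℤ) * (n + 1) / 2)) * tT j) :
    Tsq = Tp ^ 2 - ∑ s ∈ Finset.Icc 1 n,
        algebraMap ℝ A
          (∑ i ∈ Finset.Icc 1 s, (p : ℝ) ^ (i * (i + 1) / 2) * gaussBinomR p s i) * T s
      ∧ ∀ s ∈ Finset.Icc 1 n,
          ∑ i ∈ Finset.Icc 1 s, (p : ℝ) ^ (i * (i + 1) / 2) * gaussBinomR p s i
            = (∏ i ∈ Finset.Icc 1 s, ((p : ℝ) ^ i + 1)) - 1 :=
  stmt15_general p hp n k Tp Tsq T hTsq tT htT hHW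
end
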